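/- arXiv:2007.09705 — 2 statements merged into one kernel-verified Lean document; each statement's English description precedes it below -/
import Mathlib

section
/- Zooming-out identities: for all natural numbers a and b, the base-3 values of the grid entries satisfy [G(3a,2b)]_3 = 3·[G(2a,b)]_3, [G(3a,2b+1)]_3 = 3·[G(2a,b)]_3 + 1, [G(3a+1,2b)]_3 = 3·[G(2a,b)]_3 + 2, [G(3a+1,2b+1)]_3 = 3·[G(2a+1,b)]_3, [G(3a+2,2b)]_3 = 3·[G(2a+1,b)]_3 + 1, and [G(3a+2,2b+1)]_3 = 3·[G(2a+1,b)]_3 + 2. -/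
/-!
Under `addTwo`, the last digit of `w ++ [d]` runs through the 3-cycle `0 ↦ 2 ↦ 1 ↦ 0`, and
the prefix `w` receives `addTwo` exactly on the two steps `2 ↦ 1` and `1 ↦ 0`. Hence three steps
on `w ++ [d]` are two steps on `w` with `d` restored, so `3a + r` steps on `w ++ [d]` are `2a`
steps on `w` followed by `r` steps of this cycle. Since the binary representation of `2b + e`
is that of `b` with `e` appended, this is the claim.
-/

abbrev Digit := Fin 3

/-- Base-3 value of a digit string (most significant digit first). -/
def val3 (w : List Digit) : ℕ := w.foldl (fun acc d => 3 * acc + d.val) 0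

/-- Helper for `addTwo`, acting on the reversed (least significant digit first) string:
replace each digit `d` by `d - 1 (mod 3)` up to and including the first digit 0;
if no digit 0 occurs, a digit 0 is first prepended at the most significant end
(and then becomes 2). -/
def addTwoAux : List Digit → List Digit
  | [] => [2]
  | d :: rest => if d = 0 then (d + 2) :: rest else (d + 2) :: addTwoAux rest

/-- Adding two in base 3/2: all digits at or to the right of the rightmost 0
(including that 0) are decreased by 1 modulo 3; if there is no 0, a 0 is first
prepended. -/
def addTwo (w : List Digit) : List Digit := (addTwoAux w.reverse).reverse

/-- Binary representation of `j` (digits 0 and 1, most significant first, no leading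
zeros), with `binRep 0 = [0]`. -/
def binRep (j : ℕ) : List Digit :=
  if j = 0 then [0] else (Nat.digits 2 j).reverse.map (fun (d : ℕ) => (Fin.ofNat 3 d : Digit))

/-- The grid: row 0 consists of the binary representations in increasing order, and
each subsequent row is obtained entrywise by adding two in base 3/2. -/
def G : ℕ → ℕ → List Digit
  | 0, j => binRep j
  | i + 1, j => addTwo (G i j)

@[simp]
lemma val3_append_singleton (w : List Digit) (d : Digit) :
    val3 (w ++ [d]) = 3 * val3 w + d.val := by
  simp [val3, List.foldl_append]

@[simp]
lemma addTwo_append_zero (w : List Digit) : addTwo (w ++ [0]) = w ++ [2] := by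
  simp [addTwo, addTwoAux]

@[simp]
lemma addTwo_append_one (w : List Digit) : addTwo (w ++ [1]) = addTwo w ++ [0] := by
  simp [addTwo, addTwoAux]

@[simp]
lemma addTwo_append_two (w : List Digit) : addTwo (w ++ [2]) = addTwo w ++ [1] := by
  simp [addTwo, addTwoAux]

lemma addTwo_iterate_three_append (w : List Digit) (d : Digit) :
    addTwo^[3] (w ++ [d]) = addTwo^[2] w ++ [d] := by
  fin_cases d <;> simp

lemma addTwo_iterate_three_mul_append (a : ℕ) (w : List Digit) (d : Digit) :
    addTwo^[3 * a] (w ++ [d]) = addTwo^[2 * a] w ++ [d] := by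
  induction a generalizing w with
  | zero => rfl
  | succ a ih =>
    rw [Nat.mul_succ, Function.iterate_add_apply, addTwo_iterate_three_append, ih,
      ← Function.iterate_add_apply, Nat.mul_succ]

/-- Binary digits of `j`, most significant first; unlike `binRep`, empty for `j = 0`. -/
def binDigits (j : ℕ) : List Digit :=
  (Nat.digits 2 j).reverse.map (fun (d : ℕ) => (Fin.ofNat 3 d : Digit))

lemma binRep_two_mul (b : ℕ) : binRep (2 * b) = binDigits b ++ [0] := by
  rcases Nat.eq_zero_or_pos b with rfl | hb
  · rfl
  · rw [binRep, if_neg (by omega), binDigits, Nat.digits_def' (by norm_num) (by omega)]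
    simp

lemma binRep_two_mul_add_one (b : ℕ) : binRep (2 * b + 1) = binDigits b ++ [1] := by
  rw [binRep, if_neg (by omega), binDigits, Nat.digits_def' (by norm_num) (by omega)]
  simp [show (2 * b + 1) / 2 = b by omega]
  rfl

lemma G_eq_iterate (i j : ℕ) : G i j = addTwo^[i] (binRep j) := by
  induction i with
  | zero => rfl
  | succ i ih => rw [Function.iterate_succ_apply', ← ih]; rfl

lemma G_two_mul (i b : ℕ) : G i (2 * b) = addTwo^[i] (binDigits b ++ [0]) := by
  rw [G_eq_iterate, binRep_two_mul]

lemma G_two_mul_add_one (i b : ℕ) : G i (2 * b + 1) = addTwo^[i] (binDigits b ++ [1]) := by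
  rw [G_eq_iterate, binRep_two_mul_add_one]

/-- The leading zero of `binRep 0 = [0]` does not affect the value, since `addTwo [0] = addTwo []`. -/
lemma val3_G (i b : ℕ) : val3 (G i b) = val3 (addTwo^[i] (binDigits b)) := by
  rw [G_eq_iterate]
  rcases Nat.eq_zero_or_pos b with rfl | hb
  · cases i with
    | zero => rfl
    | succ i => rfl
  · rw [binRep, if_neg (by omega), binDigits]

/-- Zooming-out identities for the base-3 values of the grid entries. -/
theorem zooming_out (a b : ℕ) :
    val3 (G (3 * a) (2 * b)) = 3 * val3 (G (2 * a) b) ∧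
    val3 (G (3 * a) (2 * b + 1)) = 3 * val3 (G (2 * a) b) + 1 ∧
    val3 (G (3 * a + 1) (2 * b)) = 3 * val3 (G (2 * a) b) + 2 ∧
    val3 (G (3 * a + 1) (2 * b + 1)) = 3 * val3 (G (2 * a + 1) b) ∧
    val3 (G (3 * a + 2) (2 * b)) = 3 * val3 (G (2 * a + 1) b) + 1 ∧
    val3 (G (3 * a + 2) (2 * b + 1)) = 3 * val3 (G (2 * a + 1) b) + 2 := by
  simp only [G_two_mul, G_two_mul_add_one, val3_G, Function.iterate_succ_apply',
    addTwo_iterate_three_mul_append, addTwo_append_zero, addTwo_append_one, addTwo_append_two, val3_append_singleton]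
  simp
end

section
/- The base-3 values of the zeroth column of the grid are strictly increasing: for all natural numbers j < i, [G(j,0)]_3 < [G(i,0)]_3. -/
/-! Read least significant digit first, `addTwo` turns the first 0 into a 2 and lowers each
earlier digit by one. Inductively the value grows by at least 2: a lowered digit loses 1 but the
remaining string, which counts three times as much, gains at least 2. So every column of the grid
is strictly increasing in base 3. -/

lemma val3_eq_ofDigits (w : List Digit) : val3 w = Nat.ofDigits 3 (w.reverse.map Fin.val) := by
  simp only [val3, List.foldl_eq_foldr_reverse, Nat.ofDigits_eq_foldr, List.foldr_map, Nat.cast_id,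
    add_comm]

lemma ofDigits_addTwoAux (l : List Digit) :
    Nat.ofDigits 3 (l.map Fin.val) + 2 ≤ Nat.ofDigits 3 ((addTwoAux l).map Fin.val) := by
  induction l with
  | nil => simp [addTwoAux]
  | cons d rest ih =>
    by_cases hd : d = 0
    · simp [addTwoAux, hd, Nat.ofDigits_cons, add_comm]
    · have hdec : (d + 2 : Digit).val + 1 = d.val := by
        have := Fin.val_ne_of_ne hd
        rw [Fin.val_add]
        omega
      simp only [addTwoAux, if_neg hd, List.map_cons, Nat.ofDigits_cons]
      omega

lemma val3_lt_val3_addTwo (w : List Digit) : val3 w < val3 (addTwo w) := by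
  have := ofDigits_addTwoAux w.reverse
  rw [val3_eq_ofDigits, val3_eq_ofDigits, addTwo, List.reverse_reverse]
  omega

/-- The base-3 values of the zeroth column of the grid are strictly increasing. -/
theorem zeroth_column_strict_mono (j i : ℕ) (h : j < i) :
    val3 (G j 0) < val3 (G i 0) :=
  strictMono_nat_of_lt_succ (fun n => val3_lt_val3_addTwo (G n 0)) h
end
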